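/- Let Ω ⊆ ℝᵐ be open with data (γ, ℓ, ℓ², 𝐘) in a chart, Σ := {x ∈ Ω : x₁ = 0} and U := {X ∈ ℝᵐ : X₁ = 0}. For any two normal pairs (T₁,C₁), (T₂,C₂) of Σ and any smooth functions f₁, f₂ : Ω → ℝ, at every p ∈ Σ ∩ Ω and for all X, Y ∈ U: 𝒦^{(f₁T₁ + f₂T₂, f₁C₁ + f₂C₂)}_p(X,Y) = f₁(p)·𝒦^{(T₁,C₁)}_p(X,Y) + f₂(p)·𝒦^{(T₂,C₂)}_p(X,Y). In particular, under a change of basis of normal pairs 𝔱̂_i = Ω_i^j·𝔱_j with smooth coefficient functions Ω_i^j, one has 𝒦^{𝔱̂_i} = Ω_i^j·𝒦^{𝔱_j} on tangent vectors along Σ. -/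

import Mathlib

/-- The coordinate Lie derivative of the bilinear-form field `γ` along the vector
field `T`: `(ℒ_Tγ)_p(X,Y) = (Dγ(p)(T(p)))(X,Y) + γ_p(DT(p)X, Y) + γ_p(X, DT(p)Y)`. -/
noncomputable def lieD {m : ℕ}
    (γ : (Fin m → ℝ) → (Fin m → ℝ) →L[ℝ] (Fin m → ℝ) →L[ℝ] ℝ)
    (T : (Fin m → ℝ) → (Fin m → ℝ)) (p X Y : Fin m → ℝ) : ℝ :=
  fderiv ℝ γ p (T p) X Y + γ p (fderiv ℝ T p X) Y + γ p X (fderiv ℝ T p Y)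

/-- The second fundamental form of `Σ` along the pair `(T,C)`. -/
noncomputable def secondFF {m : ℕ}
    (γ : (Fin m → ℝ) → (Fin m → ℝ) →L[ℝ] (Fin m → ℝ) →L[ℝ] ℝ)
    (ℓ : (Fin m → ℝ) → (Fin m → ℝ) →L[ℝ] ℝ)
    (Yd : (Fin m → ℝ) → (Fin m → ℝ) → (Fin m → ℝ) → ℝ)
    (T : (Fin m → ℝ) → (Fin m → ℝ)) (C : (Fin m → ℝ) → ℝ)
    (p X Y : Fin m → ℝ) : ℝ :=
  (1 / 2) * lieD γ T p X Y + C p * Yd p X Y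
    + (1 / 2) * (fderiv ℝ C p X * ℓ p Y + fderiv ℝ C p Y * ℓ p X)

/-- the second fundamental form of `Σ = {x₁ = 0}` depends
(function-)linearly on the normal pair: for normal pairs `(T₁,C₁)`, `(T₂,C₂)` and
smooth functions `f₁`, `f₂`, at `p ∈ Σ ∩ Ω` and on tangent vectors,
`𝒦^{(f₁T₁+f₂T₂, f₁C₁+f₂C₂)} = f₁·𝒦^{(T₁,C₁)} + f₂·𝒦^{(T₂,C₂)}`; in particular the
second fundamental forms transform linearly under a change of basis of normal
pairs. -/
theorem secondFF_linear_combination {m : ℕ} [NeZero m] (hm : 2 ≤ m)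
    (Ω : Set (Fin m → ℝ)) (hΩ : IsOpen Ω)
    (γ : (Fin m → ℝ) → (Fin m → ℝ) →L[ℝ] (Fin m → ℝ) →L[ℝ] ℝ)
    (ℓ : (Fin m → ℝ) → (Fin m → ℝ) →L[ℝ] ℝ)
    (ℓ2 : (Fin m → ℝ) → ℝ)
    (Yd : (Fin m → ℝ) → (Fin m → ℝ) → (Fin m → ℝ) → ℝ)
    (hγ : ContDiffOn ℝ (⊤ : ℕ∞) γ Ω) (hℓ : ContDiffOn ℝ (⊤ : ℕ∞) ℓ Ω)
    (hℓ2 : ContDiffOn ℝ (⊤ : ℕ∞) ℓ2 Ω)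
    (hγsym : ∀ q ∈ Ω, ∀ X Y : Fin m → ℝ, γ q X Y = γ q Y X)
    (hYsym : ∀ q ∈ Ω, ∀ X Y : Fin m → ℝ, Yd q X Y = Yd q Y X)
    (T₁ T₂ : (Fin m → ℝ) → (Fin m → ℝ)) (C₁ C₂ : (Fin m → ℝ) → ℝ)
    (hT₁ : ContDiffOn ℝ (⊤ : ℕ∞) T₁ Ω) (hC₁ : ContDiffOn ℝ (⊤ : ℕ∞) C₁ Ω)
    (hT₂ : ContDiffOn ℝ (⊤ : ℕ∞) T₂ Ω) (hC₂ : ContDiffOn ℝ (⊤ : ℕ∞) C₂ Ω)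
    (hNP₁ : ∀ q ∈ Ω, q 0 = 0 → ∀ X : Fin m → ℝ, X 0 = 0 →
      C₁ q * ℓ q X + γ q (T₁ q) X = 0)
    (hNP₂ : ∀ q ∈ Ω, q 0 = 0 → ∀ X : Fin m → ℝ, X 0 = 0 →
      C₂ q * ℓ q X + γ q (T₂ q) X = 0)
    (f₁ f₂ : (Fin m → ℝ) → ℝ)
    (hf₁ : ContDiffOn ℝ (⊤ : ℕ∞) f₁ Ω) (hf₂ : ContDiffOn ℝ (⊤ : ℕ∞) f₂ Ω)
    (p : Fin m → ℝ) (hpΩ : p ∈ Ω) (hp0 : p 0 = 0)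
    (X Y : Fin m → ℝ) (hX : X 0 = 0) (hY : Y 0 = 0) :
    secondFF γ ℓ Yd (fun q => f₁ q • T₁ q + f₂ q • T₂ q)
        (fun q => f₁ q * C₁ q + f₂ q * C₂ q) p X Y
      = f₁ p * secondFF γ ℓ Yd T₁ C₁ p X Y
        + f₂ p * secondFF γ ℓ Yd T₂ C₂ p X Y := by
  have hmem : Ω ∈ nhds p := hΩ.mem_nhds hpΩ
  have dT₁ : DifferentiableAt ℝ T₁ p :=
    ((hT₁.differentiableOn (by simp)) p hpΩ).differentiableAt hmem
  have dT₂ : DifferentiableAt ℝ T₂ p :=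
    ((hT₂.differentiableOn (by simp)) p hpΩ).differentiableAt hmem
  have dC₁ : DifferentiableAt ℝ C₁ p :=
    ((hC₁.differentiableOn (by simp)) p hpΩ).differentiableAt hmem
  have dC₂ : DifferentiableAt ℝ C₂ p :=
    ((hC₂.differentiableOn (by simp)) p hpΩ).differentiableAt hmem
  have df₁ : DifferentiableAt ℝ f₁ p :=
    ((hf₁.differentiableOn (by simp)) p hpΩ).differentiableAt hmem
  have df₂ : DifferentiableAt ℝ f₂ p :=
    ((hf₂.differentiableOn (by simp)) p hpΩ).differentiableAt hmem
  have hT : fderiv ℝ (fun q => f₁ q • T₁ q + f₂ q • T₂ q) p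
      = (f₁ p • fderiv ℝ T₁ p + (fderiv ℝ f₁ p).smulRight (T₁ p))
        + (f₂ p • fderiv ℝ T₂ p + (fderiv ℝ f₂ p).smulRight (T₂ p)) := by
    rw [fderiv_fun_add (f := fun q => f₁ q • T₁ q) (g := fun q => f₂ q • T₂ q) (df₁.smul dT₁) (df₂.smul dT₂), fderiv_fun_smul df₁ dT₁, fderiv_fun_smul df₂ dT₂]
  have hC : fderiv ℝ (fun q => f₁ q * C₁ q + f₂ q * C₂ q) p
      = (f₁ p • fderiv ℝ C₁ p + C₁ p • fderiv ℝ f₁ p)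
        + (f₂ p • fderiv ℝ C₂ p + C₂ p • fderiv ℝ f₂ p) := by
    rw [fderiv_fun_add (f := fun q => f₁ q * C₁ q) (g := fun q => f₂ q * C₂ q) (df₁.mul dC₁) (df₂.mul dC₂), fderiv_fun_mul df₁ dC₁, fderiv_fun_mul df₂ dC₂]
  have n1X := hNP₁ p hpΩ hp0 X hX
  have n1Y := hNP₁ p hpΩ hp0 Y hY
  have n2X := hNP₂ p hpΩ hp0 X hX
  have n2Y := hNP₂ p hpΩ hp0 Y hY
  have s1 : γ p X (T₁ p) = γ p (T₁ p) X := hγsym p hpΩ X (T₁ p)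
  have s2 : γ p X (T₂ p) = γ p (T₂ p) X := hγsym p hpΩ X (T₂ p)
  simp only [secondFF, lieD, hT, hC, ContinuousLinearMap.add_apply,
    ContinuousLinearMap.smul_apply, ContinuousLinearMap.smulRight_apply, smul_eq_mul,
    map_add, map_smul, Pi.smul_apply, Pi.add_apply]
  linear_combination (1/2 : ℝ) * fderiv ℝ f₁ p X * n1Y
    + (1/2 : ℝ) * fderiv ℝ f₁ p Y * n1X
    + (1/2 : ℝ) * fderiv ℝ f₂ p X * n2Y
    + (1/2 : ℝ) * fderiv ℝ f₂ p Y * n2X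
    + (1/2 : ℝ) * fderiv ℝ f₁ p Y * (s1 - n1X + n1X)
    + (1/2 : ℝ) * fderiv ℝ f₂ p Y * (s2 - n2X + n2X)
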